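/- arXiv:2510.09782 — 3 statements merged into one kernel-verified Lean document; each statement's English description precedes it below -/
import Mathlib

section
/- Let d ≥ 1 and let x₁, x₂, x₃ be three affinely independent points of EuclideanSpace ℝ (Fin d). With u = x₂ − x₁ and v = x₃ − x₂, the Menger curvature formula satisfies c_M(x₁,x₂,x₃) = 2·Real.sqrt(1 − cosSim(u,v)²)/‖x₃ − x₁‖ = 1/R, where R is the circumradius of the 2-simplex with vertices x₁, x₂, x₃. -/
open RealInnerProductSpace

/-- Cosine similarity of two vectors in a real inner product space. -/
noncomputable def cosSim {E : Type*} [NormedAddCommGroup E] [InnerProductSpace ℝ E]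
    (u v : E) : ℝ :=
  ⟪u, v⟫ / (‖u‖ * ‖v‖)

/-- The Menger curvature formula for three points. -/
noncomputable def mengerCurvature {E : Type*} [NormedAddCommGroup E]
    [InnerProductSpace ℝ E] (x₁ x₂ x₃ : E) : ℝ :=
  2 * Real.sqrt (1 - cosSim (x₂ - x₁) (x₃ - x₂) ^ 2) / ‖x₃ - x₁‖

private lemma norm_comb_sq {E : Type*} [NormedAddCommGroup E] [InnerProductSpace ℝ E]
    (u v : E) (α β : ℝ) :
    ‖α • u + β • v‖ ^ 2 = α^2 * ‖u‖^2 + 2*α*β*⟪u,v⟫ + β^2*‖v‖^2 := by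
  rw [← real_inner_self_eq_norm_sq]
  simp only [inner_add_left, inner_add_right, real_inner_smul_left, real_inner_smul_right,
    real_inner_self_eq_norm_sq, real_inner_comm u v, norm_smul, mul_pow, sq_abs,
    Real.norm_eq_abs]
  ring

theorem mengerCurvature_eq_inv_circumradius
    (d : ℕ) (hd : 1 ≤ d) (x₁ x₂ x₃ : EuclideanSpace ℝ (Fin d))
    (h : AffineIndependent ℝ ![x₁, x₂, x₃]) :
    mengerCurvature x₁ x₂ x₃ =
      1 / (⟨![x₁, x₂, x₃], h⟩ :
        Affine.Simplex ℝ (EuclideanSpace ℝ (Fin d)) 2).circumradius := by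
  set u : EuclideanSpace ℝ (Fin d) := x₂ - x₁ with hu_def
  set v : EuclideanSpace ℝ (Fin d) := x₃ - x₂ with hv_def
  set a : ℝ := ‖u‖^2 with ha_def
  set b : ℝ := ‖v‖^2 with hb_def
  set c : ℝ := ⟪u,v⟫ with hc_def
  -- nondegeneracy
  have h12 : x₁ ≠ x₂ := by
    have := h.injective.ne (show (0 : Fin 3) ≠ 1 by decide)
    simpa using this
  have h13 : x₁ ≠ x₃ := by
    have := h.injective.ne (show (0 : Fin 3) ≠ 2 by decide)
    simpa using this
  have h23 : x₂ ≠ x₃ := by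
    have := h.injective.ne (show (1 : Fin 3) ≠ 2 by decide)
    simpa using this
  have hu : u ≠ 0 := sub_ne_zero.mpr h12.symm
  have hv : v ≠ 0 := sub_ne_zero.mpr h23.symm
  have hw : x₃ - x₁ ≠ 0 := sub_ne_zero.mpr h13.symm
  have key : ∀ t : ℝ, v ≠ t • u := by
    intro t ht
    apply affineIndependent_iff_not_collinear.mp h
    have hx1 : x₁ ∈ Set.range ![x₁, x₂, x₃] := ⟨0, rfl⟩
    rw [collinear_iff_of_mem hx1]
    refine ⟨u, ?_⟩
    rintro p ⟨i, rfl⟩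
    fin_cases i
    · exact ⟨0, by simp⟩
    · refine ⟨1, ?_⟩
      show x₂ = (1:ℝ) • u +ᵥ x₁
      simp only [one_smul, vadd_eq_add, hu_def]
      abel
    · refine ⟨1 + t, ?_⟩
      show x₃ = (1 + t : ℝ) • u +ᵥ x₁
      have : x₃ = v + u + x₁ := by simp only [hu_def, hv_def]; abel
      rw [this, ht]
      simp only [add_smul, one_smul, vadd_eq_add]
      abel
  have hun : (0:ℝ) < ‖u‖ := norm_pos_iff.mpr hu
  have hvn : (0:ℝ) < ‖v‖ := norm_pos_iff.mpr hv
  have ha : (0:ℝ) < a := pow_pos hun 2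
  have hb : (0:ℝ) < b := pow_pos hvn 2
  -- strict Cauchy-Schwarz
  have hcs1 : c < ‖u‖ * ‖v‖ := by
    rw [hc_def]
    rw [inner_lt_norm_mul_iff_real]
    intro heq
    refine key (‖u‖⁻¹ * ‖v‖) ?_
    calc v = ‖u‖⁻¹ • (‖u‖ • v) := by
            rw [smul_smul, inv_mul_cancel₀ hun.ne', one_smul]
      _ = ‖u‖⁻¹ • (‖v‖ • u) := by rw [heq]
      _ = (‖u‖⁻¹ * ‖v‖) • u := by rw [smul_smul]
  have hcs2 : -c < ‖u‖ * ‖v‖ := by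
    have : ⟪-u, v⟫ < ‖-u‖ * ‖v‖ := by
      rw [inner_lt_norm_mul_iff_real]
      intro heq
      rw [norm_neg, smul_neg] at heq
      refine key (‖u‖⁻¹ * -‖v‖) ?_
      calc v = ‖u‖⁻¹ • (‖u‖ • v) := by
              rw [smul_smul, inv_mul_cancel₀ hun.ne', one_smul]
        _ = ‖u‖⁻¹ • ((-‖v‖) • u) := by rw [← heq, neg_smul, smul_neg]
        _ = (‖u‖⁻¹ * -‖v‖) • u := by rw [smul_smul]
    simpa [hc_def] using this
  have hD : c^2 < a * b := by
    have habs : |c| < ‖u‖ * ‖v‖ := abs_lt.mpr ⟨by linarith, hcs1⟩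
    calc c^2 = |c|^2 := (sq_abs c).symm
      _ < (‖u‖ * ‖v‖)^2 := by
          exact pow_lt_pow_left₀ habs (abs_nonneg c) two_ne_zero
      _ = a * b := by rw [mul_pow]
  set D : ℝ := a * b - c^2 with hD_def
  have hDpos : (0:ℝ) < D := by simp only [hD_def]; linarith
  set α : ℝ := (a*b - b*c - 2*c^2) / (2*D) with hα_def
  set β : ℝ := a*(b+c) / (2*D) with hβ_def
  set q : EuclideanSpace ℝ (Fin d) := α • u + β • v with hq_def
  -- the cosine term
  have hcos2 : cosSim u v ^ 2 = c^2 / (a*b) := by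
    rw [cosSim, div_pow, mul_pow, ← ha_def, ← hb_def, ← hc_def]
  have h1cos : 1 - cosSim u v ^ 2 = D / (a*b) := by
    rw [hcos2, hD_def]
    field_simp
  have h1cospos : 0 < 1 - cosSim u v ^ 2 := by
    rw [h1cos]
    positivity
  have hwn : (0:ℝ) < ‖x₃ - x₁‖ := norm_pos_iff.mpr hw
  set r : ℝ := ‖x₃ - x₁‖ / (2 * Real.sqrt (1 - cosSim u v ^ 2)) with hr_def
  have hrpos : 0 < r := by
    apply div_pos hwn
    positivity
  have huv : x₃ - x₁ = u + v := by simp only [hu_def, hv_def]; abel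
  have hwsq : ‖x₃ - x₁‖^2 = a + b + 2*c := by
    rw [huv, norm_add_sq_real, ← ha_def, ← hb_def, ← hc_def]
    ring
  have hr2 : r^2 = (a+b+2*c) * (a*b) / (4*D) := by
    rw [hr_def, div_pow, mul_pow, Real.sq_sqrt h1cospos.le, hwsq, h1cos]
    rw [div_eq_div_iff (by positivity) (by positivity)]
    field_simp [hDpos.ne', ha.ne', hb.ne']
    ring
  -- the three distances
  have hq1 : ‖q‖ = r := by
    have hsq : ‖q‖^2 = r^2 := by
      rw [hq_def, norm_comb_sq, ← ha_def, ← hb_def, ← hc_def, hr2, hα_def, hβ_def]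
      field_simp [hDpos.ne', ha.ne', hb.ne']
      ring
    calc ‖q‖ = Real.sqrt (‖q‖^2) := (Real.sqrt_sq (norm_nonneg q)).symm
      _ = Real.sqrt (r^2) := by rw [hsq]
      _ = r := Real.sqrt_sq hrpos.le
  have hq2 : ‖q - u‖ = r := by
    have hrw : q - u = (α - 1) • u + β • v := by
      rw [hq_def, sub_smul, one_smul]; abel
    have hsq : ‖q - u‖^2 = r^2 := by
      rw [hrw, norm_comb_sq, ← ha_def, ← hb_def, ← hc_def, hr2, hα_def, hβ_def]
      field_simp [hDpos.ne', ha.ne', hb.ne']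
      ring
    calc ‖q - u‖ = Real.sqrt (‖q - u‖^2) := (Real.sqrt_sq (norm_nonneg _)).symm
      _ = Real.sqrt (r^2) := by rw [hsq]
      _ = r := Real.sqrt_sq hrpos.le
  have hq3 : ‖q - (u + v)‖ = r := by
    have hrw : q - (u + v) = (α - 1) • u + (β - 1) • v := by
      rw [hq_def, sub_smul, sub_smul, one_smul, one_smul]; abel
    have hsq : ‖q - (u + v)‖^2 = r^2 := by
      rw [hrw, norm_comb_sq, ← ha_def, ← hb_def, ← hc_def, hr2, hα_def, hβ_def]
      field_simp [hDpos.ne', ha.ne', hb.ne']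
      ring
    calc ‖q - (u + v)‖ = Real.sqrt (‖q - (u + v)‖^2) := (Real.sqrt_sq (norm_nonneg _)).symm
      _ = Real.sqrt (r^2) := by rw [hsq]
      _ = r := Real.sqrt_sq hrpos.le
  -- circumradius
  set s : Affine.Simplex ℝ (EuclideanSpace ℝ (Fin d)) 2 := ⟨![x₁, x₂, x₃], h⟩ with hs_def
  set p : EuclideanSpace ℝ (Fin d) := q + x₁ with hp_def
  have hspts : s.points = ![x₁, x₂, x₃] := rfl
  have hx1m : x₁ ∈ affineSpan ℝ (Set.range s.points) := mem_affineSpan ℝ ⟨0, rfl⟩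
  have hx2m : x₂ ∈ affineSpan ℝ (Set.range s.points) := mem_affineSpan ℝ ⟨1, rfl⟩
  have hx3m : x₃ ∈ affineSpan ℝ (Set.range s.points) := mem_affineSpan ℝ ⟨2, rfl⟩
  have hum : u ∈ (affineSpan ℝ (Set.range s.points)).direction := by
    have := AffineSubspace.vsub_mem_direction hx2m hx1m
    simpa [vsub_eq_sub, hu_def] using this
  have hvm : v ∈ (affineSpan ℝ (Set.range s.points)).direction := by
    have := AffineSubspace.vsub_mem_direction hx3m hx2m
    simpa [vsub_eq_sub, hv_def] using this
  have hpm : p ∈ affineSpan ℝ (Set.range s.points) := by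
    have hqm : q ∈ (affineSpan ℝ (Set.range s.points)).direction :=
      Submodule.add_mem _ (Submodule.smul_mem _ _ hum) (Submodule.smul_mem _ _ hvm)
    have := AffineSubspace.vadd_mem_of_mem_direction hqm hx1m
    simpa [vadd_eq_add, hp_def] using this
  have hdist : ∀ i, dist (s.points i) p = r := by
    intro i
    fin_cases i
    · show dist x₁ p = r
      rw [dist_comm, dist_eq_norm]
      have : p - x₁ = q := by rw [hp_def]; abel
      rw [this, hq1]
    · show dist x₂ p = r
      rw [dist_comm, dist_eq_norm]
      have : p - x₂ = q - u := by rw [hp_def, hu_def]; abel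
      rw [this, hq2]
    · show dist x₃ p = r
      rw [dist_comm, dist_eq_norm]
      have : p - x₃ = q - (u + v) := by rw [hp_def, hu_def, hv_def]; abel
      rw [this, hq3]
  have hcirc : r = s.circumradius := s.eq_circumradius_of_dist_eq hpm hdist
  rw [← hcirc, hr_def, one_div_div]
  rw [mengerCurvature]
end

section
/- Let x₁, x₂, x₃ be pairwise distinct points in a real inner product space. Then the Menger curvature formula is invariant under every permutation of the three points: for any permutation σ of {1,2,3}, c_M(x_{σ(1)}, x_{σ(2)}, x_{σ(3)}) = c_M(x₁, x₂, x₃). -/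
open RealInnerProductSpace

/-!
Writing `⟪x₂ - x₁, x₃ - x₂⟫` through the side lengths `a, b, c` of the triangle by polarization,
`1 - cosSim² = H / (2ab)²` with `H = 2a²b² + 2b²c² + 2c²a² - a⁴ - b⁴ - c⁴`, sixteen times the
squared area (Heron). Hence `c_M = √H / (abc)`, which is symmetric in the side lengths, so it is
invariant under the two adjacent transpositions; these generate the symmetric group.
-/

def heronQuartic (a b c : ℝ) : ℝ :=
  2 * a ^ 2 * b ^ 2 + 2 * b ^ 2 * c ^ 2 + 2 * c ^ 2 * a ^ 2 - a ^ 4 - b ^ 4 - c ^ 4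

theorem heronQuartic_swap_left (a b c : ℝ) : heronQuartic b a c = heronQuartic a b c := by
  unfold heronQuartic; ring

theorem heronQuartic_swap_right (a b c : ℝ) : heronQuartic a c b = heronQuartic a b c := by
  unfold heronQuartic; ring

section Menger

variable {E : Type*} [NormedAddCommGroup E] [InnerProductSpace ℝ E]

theorem one_sub_cosSim_sq {u v : E} (hu : u ≠ 0) (hv : v ≠ 0) :
    1 - cosSim u v ^ 2 = heronQuartic ‖u‖ ‖v‖ ‖u + v‖ / (2 * ‖u‖ * ‖v‖) ^ 2 := by
  have hu' : ‖u‖ ≠ 0 := norm_ne_zero_iff.mpr hu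
  have hv' : ‖v‖ ≠ 0 := norm_ne_zero_iff.mpr hv
  rw [cosSim, real_inner_eq_norm_add_mul_self_sub_norm_mul_self_sub_norm_mul_self_div_two,
    heronQuartic]
  field_simp
  ring

theorem mengerCurvature_eq_sqrt_heronQuartic {x₁ x₂ x₃ : E} (h₁₂ : x₁ ≠ x₂) (h₂₃ : x₂ ≠ x₃) :
    mengerCurvature x₁ x₂ x₃ =
      √(heronQuartic (dist x₁ x₂) (dist x₂ x₃) (dist x₁ x₃)) /
        (dist x₁ x₂ * dist x₂ x₃ * dist x₁ x₃) := by
  have hu : x₂ - x₁ ≠ 0 := sub_ne_zero.mpr h₁₂.symm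
  have hv : x₃ - x₂ ≠ 0 := sub_ne_zero.mpr h₂₃.symm
  have hsum : x₂ - x₁ + (x₃ - x₂) = x₃ - x₁ := sub_add_sub_cancel' _ _ _
  have hpos : 0 < 2 * ‖x₂ - x₁‖ * ‖x₃ - x₂‖ := by
    have := norm_pos_iff.mpr hu; have := norm_pos_iff.mpr hv; positivity
  rw [mengerCurvature, one_sub_cosSim_sq hu hv, hsum, Real.sqrt_div' _ (sq_nonneg _),
    Real.sqrt_sq hpos.le, dist_eq_norm', dist_eq_norm', dist_eq_norm']
  field_simp

theorem mengerCurvature_swap_left {x₁ x₂ x₃ : E} (h₁₂ : x₁ ≠ x₂) (h₁₃ : x₁ ≠ x₃)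
    (h₂₃ : x₂ ≠ x₃) : mengerCurvature x₂ x₁ x₃ = mengerCurvature x₁ x₂ x₃ := by
  rw [mengerCurvature_eq_sqrt_heronQuartic h₁₂.symm h₁₃,
    mengerCurvature_eq_sqrt_heronQuartic h₁₂ h₂₃, dist_comm x₂ x₁, heronQuartic_swap_right,
    mul_right_comm (dist x₁ x₂)]

theorem mengerCurvature_swap_right {x₁ x₂ x₃ : E} (h₁₂ : x₁ ≠ x₂) (h₁₃ : x₁ ≠ x₃)
    (h₂₃ : x₂ ≠ x₃) : mengerCurvature x₁ x₃ x₂ = mengerCurvature x₁ x₂ x₃ := by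
  rw [mengerCurvature_eq_sqrt_heronQuartic h₁₃ h₂₃.symm,
    mengerCurvature_eq_sqrt_heronQuartic h₁₂ h₂₃, dist_comm x₃ x₂, heronQuartic_swap_left,
    heronQuartic_swap_right, heronQuartic_swap_left]
  ring

end Menger

theorem Function.Injective.comp_perm_invariant_of_swap_castSucc_succ {n : ℕ} {α β : Type*}
    {f : (Fin (n + 1) → α) → β}
    (hf : ∀ y : Fin (n + 1) → α, Function.Injective y →
      ∀ i : Fin n, f (y ∘ Equiv.swap i.castSucc i.succ) = f y)
    {x : Fin (n + 1) → α} (hx : Function.Injective x) (σ : Equiv.Perm (Fin (n + 1))) :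
    f (x ∘ σ) = f x := by
  have hσ := (Equiv.Perm.mclosure_swap_castSucc_succ n).ge (Submonoid.mem_top σ)
  refine Submonoid.closure_induction (motive := fun (σ : Equiv.Perm (Fin (n + 1))) _ =>
    ∀ y : Fin (n + 1) → α, Function.Injective y → f (y ∘ σ) = f y) ?_ (fun _ _ => rfl) ?_ hσ x hx
  · rintro _ ⟨i, rfl⟩ y hy
    exact hf y hy i
  · intro σ τ _ _ hσ hτ y hy
    rw [Equiv.Perm.coe_mul, ← Function.comp_assoc, hτ _ (hy.comp σ.injective), hσ y hy]

theorem mengerCurvature_perm_invariant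
    {E : Type*} [NormedAddCommGroup E] [InnerProductSpace ℝ E]
    (x : Fin 3 → E) (hx : Function.Injective x) (σ : Equiv.Perm (Fin 3)) :
    mengerCurvature (x (σ 0)) (x (σ 1)) (x (σ 2)) =
      mengerCurvature (x 0) (x 1) (x 2) := by
  refine hx.comp_perm_invariant_of_swap_castSucc_succ
    (f := fun y => mengerCurvature (y 0) (y 1) (y 2)) (fun y hy i => ?_) σ
  have h₀₁ : y 0 ≠ y 1 := hy.ne (by decide)
  have h₀₂ : y 0 ≠ y 2 := hy.ne (by decide)
  have h₁₂ : y 1 ≠ y 2 := hy.ne (by decide)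
  fin_cases i
  · exact mengerCurvature_swap_left h₀₁ h₀₂ h₁₂
  · exact mengerCurvature_swap_right h₀₁ h₀₂ h₁₂
end

section
/- Let x₁, x₂, x₃ be pairwise distinct points in a real inner product space. Then c_M(x₁, x₂, x₃) = 0 if and only if the set {x₁, x₂, x₃} is collinear (Collinear ℝ {x₁, x₂, x₃}). -/
open RealInnerProductSpace

lemma cosSim_sq_eq_one_iff {E : Type*} [NormedAddCommGroup E] [InnerProductSpace ℝ E]
    {u v : E} (hu : u ≠ 0) :
    cosSim u v ^ 2 = 1 ↔ ∃ r : ℝ, r ≠ 0 ∧ v = r • u := by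
  rw [show cosSim u v ^ 2 = 1 ↔ |cosSim u v| = 1 by
        rw [← sq_abs]; constructor
        · intro h; nlinarith [abs_nonneg (cosSim u v)]
        · intro h; rw [h]; norm_num]
  rw [cosSim, abs_real_inner_div_norm_mul_norm_eq_one_iff]
  exact ⟨fun h => h.2, fun h => ⟨hu, h⟩⟩

theorem mengerCurvature_eq_zero_iff_collinear
    {E : Type*} [NormedAddCommGroup E] [InnerProductSpace ℝ E]
    (x₁ x₂ x₃ : E) (h12 : x₁ ≠ x₂) (h23 : x₂ ≠ x₃) (h13 : x₁ ≠ x₃) :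
    mengerCurvature x₁ x₂ x₃ = 0 ↔ Collinear ℝ ({x₁, x₂, x₃} : Set E) := by
  have hu : x₂ - x₁ ≠ 0 := sub_ne_zero.2 h12.symm
  have hv : x₃ - x₂ ≠ 0 := sub_ne_zero.2 h23.symm
  have hw : ‖x₃ - x₁‖ ≠ 0 := norm_ne_zero_iff.2 (sub_ne_zero.2 h13.symm)
  have habs : |cosSim (x₂ - x₁) (x₃ - x₂)| ≤ 1 := by
    rw [cosSim, abs_div]
    rcases eq_or_lt_of_le (mul_nonneg (norm_nonneg (x₂ - x₁)) (norm_nonneg (x₃ - x₂)))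
      with h | h
    · simp [← h]
    · rw [div_le_one (by rwa [abs_of_pos h])]
      calc |⟪x₂ - x₁, x₃ - x₂⟫| ≤ ‖x₂ - x₁‖ * ‖x₃ - x₂‖ := abs_real_inner_le_norm _ _
        _ ≤ |‖x₂ - x₁‖ * ‖x₃ - x₂‖| := le_abs_self _
  have hcs : cosSim (x₂ - x₁) (x₃ - x₂) ^ 2 ≤ 1 := by
    rw [← sq_abs]; nlinarith [abs_nonneg (cosSim (x₂ - x₁) (x₃ - x₂))]
  have key : mengerCurvature x₁ x₂ x₃ = 0 ↔ cosSim (x₂ - x₁) (x₃ - x₂) ^ 2 = 1 := by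
    rw [mengerCurvature, div_eq_zero_iff]
    constructor
    · rintro (h | h)
      · rcases mul_eq_zero.1 h with h' | h'
        · norm_num at h'
        · have := Real.sqrt_eq_zero'.1 h'
          linarith
      · exact absurd h hw
    · intro h
      left
      rw [h]
      simp
  rw [key, cosSim_sq_eq_one_iff hu]
  constructor
  · rintro ⟨r, hr, hrv⟩
    have h3 : x₃ = (r + 1) • (x₂ - x₁) +ᵥ x₁ := by
      have h' : x₃ - x₂ = r • (x₂ - x₁) := hrv
      rw [sub_eq_iff_eq_add] at h'
      rw [h', add_smul, one_smul]
      simp only [vadd_eq_add]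
      abel
    rw [collinear_iff_of_mem (Set.mem_insert x₁ _)]
    refine ⟨x₂ - x₁, fun p hp => ?_⟩
    rcases hp with rfl | rfl | rfl
    · exact ⟨0, by simp⟩
    · exact ⟨1, by simp⟩
    · exact ⟨r + 1, h3⟩
  · intro hcol
    rw [collinear_iff_of_mem (Set.mem_insert x₁ _)] at hcol
    obtain ⟨v, hvp⟩ := hcol
    obtain ⟨r₂, hr₂⟩ := hvp x₂ (by simp)
    obtain ⟨r₃, hr₃⟩ := hvp x₃ (by simp)
    have hu' : x₂ - x₁ = r₂ • v := by rw [hr₂]; simp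
    have hv' : x₃ - x₂ = (r₃ - r₂) • v := by rw [hr₂, hr₃, sub_smul]; simp
    have hr₂0 : r₂ ≠ 0 := by rintro rfl; simp [hu'] at hu
    have hr₃0 : r₃ - r₂ ≠ 0 := by intro h; rw [h] at hv'; simp [hv'] at hv
    refine ⟨(r₃ - r₂) / r₂, div_ne_zero hr₃0 hr₂0, ?_⟩
    rw [hv', hu', smul_smul, div_mul_cancel₀ _ hr₂0]
end
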